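/- arXiv:1906.06367 — 3 statements merged into one kernel-verified Lean document; each statement's English description precedes it below -/
import Mathlib

section
/- Let k be a field. In the product ring B = k[[t]] × k[[t]], the smallest t-adically closed k-subalgebra R containing x = (t, t) and y = (t^3, 0) equals {(f, g) ∈ B : f ≡ g mod t^3}, i.e. pairs of power series whose coefficients of t^0, t^1, t^2 agree. Consequently dim_k(B/R) = 3 (the oscnode/A_5-singularity has δ-invariant 3, hence genus 2 with 2 branches). -/
/-! Both generators lie in the subalgebra of pairs agreeing modulo `t³`, and that subalgebra is
`t`-adically closed, which gives one inclusion. Conversely, if `f ≡ g mod t³` then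
`f - g = t³ h` and `(f, g) = (g, g) + y · (h, h)`; replacing `g` and `h` by their truncations
gives elements `P(x) + y · Q(x)` of the algebra approximating `(f, g)` to any order.
The quotient is `k³`, read off from the first three coefficients of `f - g`. -/

open PowerSeries

variable (k : Type*) [Field k]

/-- The subspace of `k[[t]] × k[[t]]` of pairs of power series whose coefficients
agree in all degrees `< n`. For `n = 3` this is the oscnode (A₅) algebra. -/
noncomputable def agree (n : ℕ) : Submodule k (PowerSeries k × PowerSeries k) where
  carrier := {p | ∀ i < n, coeff i p.1 = coeff i p.2}
  add_mem' := by
    intro a b ha hb i hi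
    simp [ha i hi, hb i hi]
  zero_mem' := by intro i hi; simp
  smul_mem' := by
    intro c p hp i hi
    simp [hp i hi]

noncomputable def agreeSubalgebra (n : ℕ) : Subalgebra k (k⟦X⟧ × k⟦X⟧) :=
  (agree k n).toSubalgebra (fun _ _ => rfl) fun a b ha hb i hi => by
    simp only [Prod.fst_mul, Prod.snd_mul, coeff_mul]
    refine Finset.sum_congr rfl fun x hx => ?_
    have hx : x.1 + x.2 = i := Finset.HasAntidiagonal.mem_antidiagonal.mp hx
    rw [ha x.1 (by omega), hb x.2 (by omega)]

/-- The branchwise parametrisation of the `A_{2n-1}` singularity `y (y - xⁿ) = 0`;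
for `n = 3` it is the oscnode. -/
noncomputable def twoBranchAlgebra (R : Type*) [CommRing R] (n : ℕ) :
    Subalgebra R (R⟦X⟧ × R⟦X⟧) :=
  Algebra.adjoin R {(X, X), (X ^ n, 0)}

def tadicClosure {R : Type*} [Ring R] (S : Set (R⟦X⟧ × R⟦X⟧)) :
    Set (R⟦X⟧ × R⟦X⟧) :=
  {p | ∀ n : ℕ, ∃ q ∈ S, ∀ i < n, coeff i (p.1 - q.1) = 0 ∧ coeff i (p.2 - q.2) = 0}

theorem tadicClosure_subset_agree {n : ℕ} {S : Set (k⟦X⟧ × k⟦X⟧)}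
    (hS : S ⊆ agree k n) : tadicClosure S ⊆ agree k n := by
  intro p hp i hi
  obtain ⟨q, hqS, hpq⟩ := hp n
  obtain ⟨h₁, h₂⟩ := hpq i hi
  rw [map_sub, sub_eq_zero] at h₁ h₂
  rw [h₁, h₂]
  exact hS hqS i hi

theorem twoBranchAlgebra_le_agreeSubalgebra (n : ℕ) :
    twoBranchAlgebra k n ≤ agreeSubalgebra k n := by
  refine Algebra.adjoin_le ?_
  rintro p (rfl | rfl) i hi
  · rfl
  · simp [coeff_X_pow, hi.ne]

theorem aeval_X_eq_coe {R : Type*} [CommSemiring R] (g : Polynomial R) :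
    Polynomial.aeval (X : R⟦X⟧) g = g := by
  rw [Polynomial.aeval_def, ← Polynomial.eval₂_C_X_eq_coe]
  rfl

theorem aeval_diag_X {R : Type*} [CommSemiring R] (g : Polynomial R) :
    Polynomial.aeval ((X, X) : R⟦X⟧ × R⟦X⟧) g = ((g : R⟦X⟧), (g : R⟦X⟧)) := by
  ext : 1
  · rw [← aeval_X_eq_coe, ← AlgHom.fst_apply (R := R), ← Polynomial.aeval_algHom_apply]; rfl
  · rw [← aeval_X_eq_coe, ← AlgHom.snd_apply (R := R), ← Polynomial.aeval_algHom_apply]; rfl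

theorem diag_coe_mem_twoBranchAlgebra {R : Type*} [CommRing R] (n : ℕ) (g : Polynomial R) :
    ((g : R⟦X⟧), (g : R⟦X⟧)) ∈ twoBranchAlgebra R n :=
  aeval_diag_X g ▸ Algebra.adjoin_mono (Set.singleton_subset_iff.mpr (Set.mem_insert _ _))
    (Polynomial.aeval_mem_adjoin_singleton R _)

theorem agree_subset_tadicClosure (n : ℕ) :
    (agree k n : Set (k⟦X⟧ × k⟦X⟧)) ⊆
      tadicClosure (twoBranchAlgebra k n : Set (k⟦X⟧ × k⟦X⟧)) := by
  intro p hp m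
  obtain ⟨h, hh⟩ : X ^ n ∣ p.1 - p.2 :=
    X_pow_dvd_iff.mpr fun i hi => by rw [map_sub, sub_eq_zero]; exact hp i hi
  let f : Polynomial k := trunc m p.2
  let g : Polynomial k := trunc m h
  have hy : ((X ^ n, 0) : k⟦X⟧ × k⟦X⟧) ∈ twoBranchAlgebra k n :=
    Algebra.subset_adjoin (by simp)
  refine ⟨((f : k⟦X⟧), (f : k⟦X⟧)) + (X ^ n, 0) * ((g : k⟦X⟧), (g : k⟦X⟧)),
    add_mem (diag_coe_mem_twoBranchAlgebra n f) (mul_mem hy (diag_coe_mem_twoBranchAlgebra n g)),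
    fun i hi => ⟨?_, ?_⟩⟩
  · have hp₁ : p.1 = p.2 + X ^ n * h := by rw [← hh]; ring
    simp only [Prod.fst_add, Prod.fst_mul, hp₁, f, g]
    simp [coeff_X_pow_mul', coeff_trunc, hi, show i - n < m by omega]
  · simp [f, coeff_trunc, hi]

theorem tadicClosure_twoBranchAlgebra (n : ℕ) :
    tadicClosure (twoBranchAlgebra k n : Set (k⟦X⟧ × k⟦X⟧)) = agree k n :=
  (tadicClosure_subset_agree k (twoBranchAlgebra_le_agreeSubalgebra k n)).antisymm
    (agree_subset_tadicClosure k n)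

noncomputable def coeffDiff (n : ℕ) : (k⟦X⟧ × k⟦X⟧) →ₗ[k] Fin n → k :=
  LinearMap.pi (fun i => coeff (i : ℕ)) ∘ₗ (LinearMap.fst k _ _ - LinearMap.snd k _ _)

theorem ker_coeffDiff (n : ℕ) : LinearMap.ker (coeffDiff k n) = agree k n := by
  ext p
  simp [coeffDiff, funext_iff, sub_eq_zero, agree, Fin.forall_iff]

theorem coeffDiff_surjective (n : ℕ) : Function.Surjective (coeffDiff k n) := by
  intro v
  refine ⟨(mk fun i => if h : i < n then v ⟨i, h⟩ else 0, 0), funext fun i => ?_⟩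
  simp [coeffDiff]

theorem finrank_quotient_agree (n : ℕ) :
    Module.finrank k ((k⟦X⟧ × k⟦X⟧) ⧸ agree k n) = n := by
  rw [← ker_coeffDiff,
    ((coeffDiff k n).quotKerEquivOfSurjective (coeffDiff_surjective k n)).finrank_eq,
    Module.finrank_fin_fun]

/-- the t-adic closure of the `k`-subalgebra of `k[[t]] × k[[t]]`
generated by `x = (t,t)` and `y = (t³,0)` is exactly the set of pairs of power
series agreeing modulo `t³`, and the quotient has dimension 3 (the oscnode has
δ-invariant 3, hence genus 2 with 2 branches). -/
theorem stmt_3 :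
    ({p : PowerSeries k × PowerSeries k | ∀ n : ℕ,
        ∃ q ∈ Algebra.adjoin k
          ({((X, X) : PowerSeries k × PowerSeries k),
            ((X ^ 3, 0) : PowerSeries k × PowerSeries k)} : Set (PowerSeries k × PowerSeries k)),
          ∀ i < n, coeff i (p.1 - q.1) = 0 ∧ coeff i (p.2 - q.2) = 0}
      = (agree k 3 : Set (PowerSeries k × PowerSeries k))) ∧
    Module.finrank k ((PowerSeries k × PowerSeries k) ⧸ agree k 3) = 3 :=
  ⟨tadicClosure_twoBranchAlgebra k 3, finrank_quotient_agree k 3⟩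
end

section
/- Let k be a field of characteristic 0 (or characteristic ∉ {2,5}). A continuous k-derivation D = f(t)·d/dt of k[[t]] maps the ramphoid cusp algebra R = k ⊕ k·t^2 ⊕ t^4 k[[t]] into itself if and only if the coefficients of t^0 and t^2 in f vanish. -/
open PowerSeries

variable (k : Type*) [Field k]

/-- The ramphoid cusp algebra `k ⊕ k·t² ⊕ t⁴·k[[t]] = k[[t²,t⁵]]`. -/
noncomputable def ramphoid : Submodule k (PowerSeries k) :=
  LinearMap.ker (coeff (R := k) 1) ⊓ LinearMap.ker (coeff (R := k) 3)

theorem PowerSeries.coeff_three_mul {R : Type*} [CommSemiring R] (φ ψ : R⟦X⟧) :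
    coeff 3 (φ * ψ) = coeff 0 φ * coeff 3 ψ + coeff 1 φ * coeff 2 ψ + coeff 2 φ * coeff 1 ψ
      + coeff 3 φ * coeff 0 ψ := by
  rw [coeff_mul, Finset.Nat.sum_antidiagonal_eq_sum_range_succ_mk]
  simp only [Finset.sum_range_succ, Finset.sum_range_zero, zero_add]

variable {k}

theorem mem_ramphoid_iff {g : k⟦X⟧} : g ∈ ramphoid k ↔ coeff 1 g = 0 ∧ coeff 3 g = 0 :=
  Iff.rfl

theorem X_pow_two_mem_ramphoid : (X ^ 2 : k⟦X⟧) ∈ ramphoid k := by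
  simp [mem_ramphoid_iff, coeff_X_pow]

theorem mul_derivative_mem_ramphoid_iff {f g : k⟦X⟧} (hg : g ∈ ramphoid k) :
    f * d⁄dX k g ∈ ramphoid k ↔
      2 * coeff 2 g * coeff 0 f = 0 ∧
        4 * coeff 4 g * coeff 0 f + 2 * coeff 2 g * coeff 2 f = 0 := by
  obtain ⟨hg1, hg3⟩ := mem_ramphoid_iff.1 hg
  rw [mem_ramphoid_iff, coeff_one_mul, coeff_three_mul, ← coeff_zero_eq_constantCoeff]
  simp only [coeff_derivative, zero_add, hg1, hg3]
  exact and_congr (by ring_nf) (by ring_nf)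

theorem stmt_8_general (h2 : (2 : k) ≠ 0) (f : PowerSeries k) :
    (∀ g ∈ ramphoid k, f * derivativeFun g ∈ ramphoid k) ↔
      (coeff (R := k) 0 f = 0 ∧ coeff (R := k) 2 f = 0) := by
  constructor
  · intro h
    -- `derivativeFun` is definitionally `d⁄dX k`; testing against `g = X²` gives both conditions.
    have hX : f * d⁄dX k (X ^ 2) ∈ ramphoid k := h _ X_pow_two_mem_ramphoid
    rw [mul_derivative_mem_ramphoid_iff X_pow_two_mem_ramphoid] at hX
    simpa [coeff_X_pow, h2] using hX
  · rintro ⟨hf0, hf2⟩ g hg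
    exact (mul_derivative_mem_ramphoid_iff hg).2 (by simp [hf0, hf2])

/-- for char(k) ∉ {2,5}, the continuous derivation `f·d/dt` of
`k[[t]]` preserves the ramphoid cusp algebra iff the coefficients of `t⁰` and
`t²` in `f` vanish. -/
theorem stmt_8 (h2 : (2 : k) ≠ 0) (h5 : (5 : k) ≠ 0) (f : PowerSeries k) :
    (∀ g ∈ ramphoid k, f * derivativeFun g ∈ ramphoid k) ↔
      (coeff (R := k) 0 f = 0 ∧ coeff (R := k) 2 f = 0) :=
  stmt_8_general h2 f
end

section
/- Let T be a finite rooted tree with root ρ, let d: V(T) → ℕ and κ: V(T) → ℕ be functions with d(v) ≥ 1 for every leaf v ≠ ρ. Suppose that for every non-root vertex v, the balancing equation Σ_{w adjacent to v} (d(w) − d(v) + 1) + κ(v)·(1 − d(v)) = 2 holds (the sum is over the parent and all children of v). Then for every non-root vertex v one has d(v) ≥ 1 and d(parent(v)) > d(v); in particular d is strictly increasing along every path toward the root. -/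
/-!
Argue from the leaves towards the root. At a non-root vertex `v` whose children `w` already
satisfy `d w < d v`, we get `d v ≥ 1` (from a child, or from the leaf hypothesis), so every
child term `d w - d v + 1` and the leg term `κ v (1 - d v)` of the balancing equation are
`≤ 0`; the parent term `d (p v) - d v + 1` must then be at least `2`.
Induction from the leaves is legitimate because the root distance strictly drops from a
vertex to its parent, and a strictly monotone measure on a finite type is well-founded.
-/

theorem Nat.find_iterate_apply_lt {α : Type*} [DecidableEq α] {f : α → α} {a x : α}
    (hx : x ≠ a) (h : ∃ n, f^[n] x = a) (h' : ∃ n, f^[n] (f x) = a) :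
    Nat.find h' < Nat.find h := by
  obtain ⟨m, hm⟩ : ∃ m, Nat.find h = m + 1 :=
    Nat.exists_eq_succ_of_ne_zero fun h0 => hx (by simpa [h0] using Nat.find_spec h)
  have hreach : f^[m] (f x) = a := by
    simpa [hm, Function.iterate_succ_apply] using Nat.find_spec h
  exact hm ▸ Nat.lt_succ_of_le (Nat.find_le hreach)

theorem wellFounded_isChild {V : Type*} [Finite V] {ρ : V} {p : V → V}
    (hreach : ∀ v, ∃ n, p^[n] v = ρ) :
    WellFounded (fun w v : V => w ≠ ρ ∧ p w = v) := by
  classical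
  let depth : V → ℕ := fun v => Nat.find (hreach v)
  have : IsTrans V (fun w v => depth v < depth w) := ⟨fun _ _ _ h₁ h₂ => h₂.trans h₁⟩
  have : Std.Irrefl (fun w v : V => depth v < depth w) := ⟨fun _ => lt_irrefl _⟩
  refine Subrelation.wf ?_ (Finite.wellFounded_of_trans_of_irrefl fun w v => depth v < depth w)
  rintro w v ⟨hw, rfl⟩
  exact Nat.find_iterate_apply_lt hw (hreach w) (hreach (p w))

theorem lt_parent_of_balanced {ι : Type*} (C : Finset ι) (d : ι → ℕ) (dv dp k : ℕ)
    (hleaf : C = ∅ → 1 ≤ dv) (hchild : ∀ w ∈ C, d w < dv)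
    (hbal : (((dp : ℤ) - dv + 1) + ∑ w ∈ C, ((d w : ℤ) - dv + 1)) + (k : ℤ) * (1 - dv) = 2) :
    1 ≤ dv ∧ (dv : ℤ) < dp := by
  have hdv : 1 ≤ dv := by
    rcases C.eq_empty_or_nonempty with hC | ⟨w, hw⟩
    · exact hleaf hC
    · exact Nat.one_le_of_lt (hchild w hw)
  have hsum : ∑ w ∈ C, ((d w : ℤ) - dv + 1) ≤ 0 :=
    Finset.sum_nonpos fun w hw => by have := hchild w hw; omega
  have hlegs : (k : ℤ) * (1 - dv) ≤ 0 :=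
    mul_nonpos_of_nonneg_of_nonpos k.cast_nonneg (by omega)
  exact ⟨hdv, by linarith⟩

theorem stmt_15_general (V : Type*) [Fintype V] [DecidableEq V]
    (ρ : V) (p : V → V)
    (hreach : ∀ v : V, ∃ n : ℕ, p^[n] v = ρ)
    (d κ : V → ℕ)
    (hleaf : ∀ v : V, v ≠ ρ →
      (Finset.univ.filter (fun w => w ≠ ρ ∧ p w = v)) = ∅ → 1 ≤ d v)
    (hbal : ∀ v : V, v ≠ ρ →
      (((d (p v) : ℤ) - d v + 1) +
        ∑ w ∈ Finset.univ.filter (fun w => w ≠ ρ ∧ p w = v),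
          ((d w : ℤ) - d v + 1)) +
        (κ v : ℤ) * (1 - (d v : ℤ)) = 2) :
    ∀ v : V, v ≠ ρ → 1 ≤ d v ∧ (d v : ℤ) < d (p v) := by
  intro v
  induction v using (wellFounded_isChild hreach).induction with
  | _ v ih =>
    intro hv
    refine lt_parent_of_balanced _ d (d v) (d (p v)) (κ v) (hleaf v hv) ?_ (hbal v hv)
    intro w hw
    obtain ⟨hwρ, rfl⟩ := (Finset.mem_filter.mp hw).2
    exact_mod_cast (ih w ⟨hwρ, rfl⟩ hwρ).2

/-- on a finite rooted tree (given by a parent function `p` with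
root `ρ`), with multiplicities `d` and leg counts `κ`, if `d ≥ 1` on leaves and
the balancing equation
`Σ_{w adjacent to v} (d w − d v + 1) + κ v · (1 − d v) = 2`
holds at every non-root vertex, then `d v ≥ 1` and `d (p v) > d v` for every
non-root vertex: `d` strictly increases toward the root. -/
theorem stmt_15 (V : Type*) [Fintype V] [DecidableEq V]
    (ρ : V) (p : V → V) (hroot : p ρ = ρ)
    (hreach : ∀ v : V, ∃ n : ℕ, p^[n] v = ρ)
    (hne : ∀ v : V, v ≠ ρ → p v ≠ v)
    (d κ : V → ℕ)
    (hleaf : ∀ v : V, v ≠ ρ →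
      (Finset.univ.filter (fun w => w ≠ ρ ∧ p w = v)) = ∅ → 1 ≤ d v)
    (hbal : ∀ v : V, v ≠ ρ →
      (((d (p v) : ℤ) - d v + 1) +
        ∑ w ∈ Finset.univ.filter (fun w => w ≠ ρ ∧ p w = v),
          ((d w : ℤ) - d v + 1)) +
        (κ v : ℤ) * (1 - (d v : ℤ)) = 2) :
    ∀ v : V, v ≠ ρ → 1 ≤ d v ∧ (d v : ℤ) < d (p v) :=
  stmt_15_general V ρ p hreach d κ hleaf hbal
end
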